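/- arXiv:2012.07768 — 5 statements merged into one kernel-verified Lean document; each statement's English description precedes it below -/
import Mathlib

section
/- There exists a constant c > 0 (depending only on β and n) such that c|ξ|^β + c|k|^β ≤ ∫₀¹ |ξ + r k|^β dr for all k, ξ ∈ ℝ^n and all β ∈ (0,2]. -/
/-!
For `r ∈ [0, 1/4]` the points `ξ + r • k` and `ξ + (r + 3/4) • k` are `(3/4)‖k‖` apart, so their
norms bound `‖k‖`, and then also `‖ξ‖ ≤ ‖ξ + r • k‖ + ‖k‖ / 4`. Hence `‖ξ‖^β + ‖k‖^β` is at most a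
constant times `‖ξ + r • k‖^β + ‖ξ + (r + 3/4) • k‖^β`; integrating over `r ∈ [0, 1/4]` covers
`[0, 1/4] ∪ [3/4, 1]`.
-/

open MeasureTheory

lemma Real.rpow_le_four_rpow_mul_add_rpow {x a b β : ℝ} (hx : 0 ≤ x) (ha : 0 ≤ a) (hb : 0 ≤ b)
    (hβ : 0 ≤ β) (h : x ≤ 2 * (a + b)) : x ^ β ≤ 4 ^ β * (a ^ β + b ^ β) := by
  have hmax : max a b ^ β ≤ a ^ β + b ^ β := by
    rcases max_choice a b with hm | hm <;> rw [hm]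
    · linarith [Real.rpow_nonneg hb β]
    · linarith [Real.rpow_nonneg ha β]
  calc x ^ β ≤ (4 * max a b) ^ β := by
        gcongr
        linarith [le_max_left a b, le_max_right a b]
    _ = 4 ^ β * max a b ^ β := Real.mul_rpow (by norm_num) (ha.trans (le_max_left a b))
    _ ≤ 4 ^ β * (a ^ β + b ^ β) := by gcongr

lemma intervalIntegral.integral_add_comp_add_right_le {f : ℝ → ℝ} (hf : Continuous f)
    (hf0 : ∀ x, 0 ≤ f x) {a h d : ℝ} (hd : h ≤ d) :
    ∫ x in a..a + h, (f x + f (x + d)) ≤ ∫ x in a..a + d + h, f x := by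
  have hint : ∀ u v : ℝ, IntervalIntegrable f volume u v := hf.intervalIntegrable
  have hmid : 0 ≤ ∫ x in a + h..a + d, f x :=
    intervalIntegral.integral_nonneg (by linarith) fun x _ => hf0 x
  have hshift : IntervalIntegrable (fun x => f (x + d)) volume a (a + h) :=
    (hf.comp (continuous_add_const d)).intervalIntegrable _ _
  rw [intervalIntegral.integral_add (hint _ _) hshift,
    intervalIntegral.integral_comp_add_right, ← intervalIntegral.integral_add_adjacent_intervals
      (hint a (a + h)) (hint _ (a + d + h)), ← intervalIntegral.integral_add_adjacent_intervals
      (hint (a + h) (a + d)) (hint _ (a + d + h)), add_right_comm a h d]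
  linarith

section NormedSpace

variable {E : Type*} [NormedAddCommGroup E] [NormedSpace ℝ E]

lemma norm_le_two_mul_add_of_mem_Icc {ξ k : E} {r : ℝ} (hr : r ∈ Set.Icc (0 : ℝ) (1 / 4)) :
    ‖ξ‖ ≤ 2 * (‖ξ + r • k‖ + ‖ξ + (r + 3 / 4) • k‖) ∧
      ‖k‖ ≤ 2 * (‖ξ + r • k‖ + ‖ξ + (r + 3 / 4) • k‖) := by
  obtain ⟨hr0, hr1⟩ := hr
  have hk : (3 / 4) * ‖k‖ ≤ ‖ξ + r • k‖ + ‖ξ + (r + 3 / 4) • k‖ := by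
    calc (3 / 4) * ‖k‖ = ‖(ξ + (r + 3 / 4) • k) - (ξ + r • k)‖ := by
          rw [add_sub_add_left_eq_sub, ← sub_smul, add_sub_cancel_left, norm_smul,
            Real.norm_of_nonneg (by norm_num)]
      _ ≤ ‖ξ + r • k‖ + ‖ξ + (r + 3 / 4) • k‖ := by
          rw [add_comm ‖ξ + r • k‖]; exact norm_sub_le _ _
  have hξ : ‖ξ‖ ≤ ‖ξ + r • k‖ + r * ‖k‖ := by
    calc ‖ξ‖ = ‖(ξ + r • k) - r • k‖ := by rw [add_sub_cancel_right]
      _ ≤ ‖ξ + r • k‖ + ‖r • k‖ := norm_sub_le _ _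
      _ = ‖ξ + r • k‖ + r * ‖k‖ := by rw [norm_smul, Real.norm_of_nonneg hr0]
  have : r * ‖k‖ ≤ ‖k‖ / 4 := by nlinarith [norm_nonneg k]
  constructor <;> nlinarith [norm_nonneg (ξ + r • k), norm_nonneg (ξ + (r + 3 / 4) • k)]

theorem norm_rpow_add_norm_rpow_le_integral {β : ℝ} (hβ : 0 ≤ β) (ξ k : E) :
    ‖ξ‖ ^ β + ‖k‖ ^ β ≤ 8 * 4 ^ β * ∫ r in (0 : ℝ)..1, ‖ξ + r • k‖ ^ β := by
  set f : ℝ → ℝ := fun r => ‖ξ + r • k‖ ^ β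
  have hf : Continuous f := by fun_prop (disch := exact fun _ => Or.inr hβ)
  have hpoint : ∀ r ∈ Set.Icc (0 : ℝ) (1 / 4),
      ‖ξ‖ ^ β + ‖k‖ ^ β ≤ 2 * 4 ^ β * (f r + f (r + 3 / 4)) := by
    intro r hr
    obtain ⟨hξ, hk⟩ := norm_le_two_mul_add_of_mem_Icc (k := k) (ξ := ξ) hr
    have hξβ := Real.rpow_le_four_rpow_mul_add_rpow (norm_nonneg _) (norm_nonneg _)
      (norm_nonneg _) hβ hξ
    have hkβ := Real.rpow_le_four_rpow_mul_add_rpow (norm_nonneg _) (norm_nonneg _)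
      (norm_nonneg _) hβ hk
    linarith
  calc ‖ξ‖ ^ β + ‖k‖ ^ β = 4 * ∫ _ in (0 : ℝ)..1 / 4, (‖ξ‖ ^ β + ‖k‖ ^ β) := by
        rw [intervalIntegral.integral_const, smul_eq_mul]; ring
    _ ≤ 4 * ∫ r in (0 : ℝ)..1 / 4, 2 * 4 ^ β * (f r + f (r + 3 / 4)) := by
        gcongr
        exact intervalIntegral.integral_mono_on (by norm_num) intervalIntegrable_const
          (Continuous.intervalIntegrable (by fun_prop) _ _) hpoint
    _ = 8 * 4 ^ β * ∫ r in (0 : ℝ)..0 + 1 / 4, (f r + f (r + 3 / 4)) := by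
        rw [intervalIntegral.integral_const_mul, zero_add]; ring
    _ ≤ 8 * 4 ^ β * ∫ r in (0 : ℝ)..0 + 3 / 4 + 1 / 4, f r := by
        gcongr
        exact intervalIntegral.integral_add_comp_add_right_le hf (fun _ => by positivity)
          (by norm_num)
    _ = 8 * 4 ^ β * ∫ r in (0 : ℝ)..1, ‖ξ + r • k‖ ^ β := by norm_num [f]

end NormedSpace

theorem stmt_4_general (n : ℕ) (β : ℝ) (hβ0 : 0 < β) :
    ∃ c > 0, ∀ k ξ : EuclideanSpace ℝ (Fin n),
      c * ‖ξ‖ ^ β + c * ‖k‖ ^ β ≤ ∫ r in (0:ℝ)..1, ‖ξ + r • k‖ ^ β := by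
  have hC : (0 : ℝ) < 8 * 4 ^ β := by positivity
  refine ⟨(8 * 4 ^ β)⁻¹, inv_pos.mpr hC, fun k ξ => ?_⟩
  rw [← mul_add, inv_mul_le_iff₀ hC]
  exact norm_rpow_add_norm_rpow_le_integral hβ0.le ξ k

/-- There is c > 0 with c|ξ|^β + c|k|^β ≤ ∫₀¹ |ξ + r k|^β dr. -/
theorem stmt_4 (n : ℕ) (hn : 1 ≤ n) (β : ℝ) (hβ0 : 0 < β) (hβ2 : β ≤ 2) :
    ∃ c > 0, ∀ k ξ : EuclideanSpace ℝ (Fin n),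
      c * ‖ξ‖ ^ β + c * ‖k‖ ^ β ≤ ∫ r in (0:ℝ)..1, ‖ξ + r • k‖ ^ β :=
  stmt_4_general n β hβ0
end

section
/- Let β ∈ (0,2], s ≥ 0, γ > 0, and define ρ_t(x) = x^{(β/2)(s+1)} exp(−γ x^{β/2} t) for x ≥ 0 and t ≥ 0. Then for every n ∈ ℕ₀ there is a constant C(n) independent of t such that x^n |ρ_t^{(n)}(x)| ≤ C(n) ρ_t(x/2) for all x > 0, t ≥ 0. -/
/-!
For `x > 0` and `u = c x^b`, the `n`-th derivative of `y^a e^{-c y^b}` is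
`x^(a-n) e^{-u} P_n(u)` for a polynomial `P_n` that does not depend on `c`. Hence
`x^n |ρ^(n)(x)| = x^a |P_n(u)| e^{-u}`. Split `e^{-u} = e^{-δu} e^{-u 2^{-b}}` with
`δ = 1 - 2^{-b} > 0`: the first factor tames the polynomial uniformly in `u ≥ 0`
(as `u^k ≤ k! δ^{-k} e^{δu}`), and `u 2^{-b} = c (x/2)^b` turns the second into the
exponential of `ρ` at `x/2`; finally `x^a = 2^a (x/2)^a`.
-/

open Polynomial Real Finset Nat

lemma pow_mul_exp_neg_mul_le_factorial_div {δ u : ℝ} (hδ : 0 < δ) (hu : 0 ≤ u) (k : ℕ) :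
    u ^ k * exp (-(δ * u)) ≤ k ! / δ ^ k := by
  have hTaylor : (δ * u) ^ k / k ! ≤ exp (δ * u) :=
    Real.pow_div_factorial_le_exp (x := δ * u) (by positivity) k
  rw [exp_neg, ← div_eq_mul_inv, div_le_div_iff₀ (exp_pos _) (by positivity)]
  rw [div_le_iff₀ (by positivity), mul_pow] at hTaylor
  linarith

lemma Polynomial.exists_abs_eval_mul_exp_neg_mul_le (P : ℝ[X]) {δ : ℝ} (hδ : 0 < δ) :
    ∃ K > 0, ∀ u, 0 ≤ u → |P.eval u| * exp (-(δ * u)) ≤ K := by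
  set N := P.natDegree + 1
  refine ⟨∑ k ∈ range N, |P.coeff k| * (k ! / δ ^ k) + 1, by positivity, fun u hu => ?_⟩
  have hP : |P.eval u| ≤ ∑ k ∈ range N, |P.coeff k| * u ^ k := by
    rw [eval_eq_sum_range]
    refine (abs_sum_le_sum_abs _ _).trans_eq (sum_congr rfl fun k _ => ?_)
    rw [abs_mul, abs_pow, abs_of_nonneg hu]
  calc |P.eval u| * exp (-(δ * u))
      ≤ (∑ k ∈ range N, |P.coeff k| * u ^ k) * exp (-(δ * u)) := by gcongr
    _ = ∑ k ∈ range N, |P.coeff k| * (u ^ k * exp (-(δ * u))) := by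
        rw [sum_mul]; simp only [mul_assoc]
    _ ≤ ∑ k ∈ range N, |P.coeff k| * (k ! / δ ^ k) := by
        gcongr with k; exact pow_mul_exp_neg_mul_le_factorial_div hδ hu k
    _ ≤ _ := le_add_of_nonneg_right zero_le_one

/-- Since `x · d(c x^b)/dx = b u`, differentiating `x^(a-n) e^{-u} P(u)` gives
`x^(a-n-1) e^{-u} ((a-n) P + b X (P' - P))(u)`. -/
noncomputable def rpowExpDerivPoly (a b : ℝ) : ℕ → ℝ[X]
  | 0 => 1
  | n + 1 => C (a - n) * rpowExpDerivPoly a b n +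
      C b * X * (derivative (rpowExpDerivPoly a b n) - rpowExpDerivPoly a b n)

lemma hasDerivAt_rpow_mul_exp_mul_eval (a b c : ℝ) (P : ℝ[X]) {x : ℝ} (hx : 0 < x) :
    HasDerivAt (fun y => y ^ a * exp (-(c * y ^ b)) * P.eval (c * y ^ b))
      (x ^ (a - 1) * exp (-(c * x ^ b)) *
        (C a * P + C b * X * (derivative P - P)).eval (c * x ^ b)) x := by
  have hu : HasDerivAt (fun y => c * y ^ b) (c * (b * x ^ (b - 1))) x :=
    (hasDerivAt_rpow_const (Or.inl hx.ne')).const_mul c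
  have hexp : HasDerivAt (fun y => exp (-(c * y ^ b)))
      (exp (-(c * x ^ b)) * -(c * (b * x ^ (b - 1)))) x := hu.neg.exp
  have heval : HasDerivAt (fun y => P.eval (c * y ^ b))
      ((derivative P).eval (c * x ^ b) * (c * (b * x ^ (b - 1)))) x :=
    (P.hasDerivAt _).comp x hu
  refine (((hasDerivAt_rpow_const (Or.inl hx.ne')).mul hexp).mul heval).congr_deriv ?_
  have hxa : x ^ a = x ^ (a - 1) * x := by rw [← rpow_add_one hx.ne']; ring_nf
  have hxb : x ^ (b - 1) * x = x ^ b := by rw [← rpow_add_one hx.ne']; ring_nf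
  simp only [Pi.mul_apply, eval_add, eval_mul, eval_C, eval_X, eval_sub, hxa]
  linear_combination (x ^ (a - 1) * exp (-(c * x ^ b)) * c * b *
    (eval (c * x ^ b) (derivative P) - eval (c * x ^ b) P)) * hxb

lemma iteratedDeriv_rpow_mul_exp_eq (a b c : ℝ) (n : ℕ) {x : ℝ} (hx : 0 < x) :
    iteratedDeriv n (fun y => y ^ a * exp (-(c * y ^ b))) x =
      x ^ (a - n) * exp (-(c * x ^ b)) * (rpowExpDerivPoly a b n).eval (c * x ^ b) := by
  induction n generalizing x with
  | zero => simp [rpowExpDerivPoly]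
  | succ n ih =>
    have hEq : iteratedDeriv n (fun y => y ^ a * exp (-(c * y ^ b))) =ᶠ[nhds x]
        fun y => y ^ (a - n) * exp (-(c * y ^ b)) * (rpowExpDerivPoly a b n).eval (c * y ^ b) :=
      Filter.eventually_of_mem (Ioi_mem_nhds hx) fun y hy => ih hy
    rw [iteratedDeriv_succ, hEq.deriv_eq,
      (hasDerivAt_rpow_mul_exp_mul_eval _ b c _ hx).deriv, rpowExpDerivPoly]
    push_cast
    ring_nf

lemma exists_abs_iteratedDeriv_rpow_mul_exp_le (a : ℝ) {b : ℝ} (hb : 0 < b) (n : ℕ) :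
    ∃ K > 0, ∀ c, 0 ≤ c → ∀ x, 0 < x →
      x ^ n * |iteratedDeriv n (fun y => y ^ a * exp (-(c * y ^ b))) x| ≤
        K * ((x / 2) ^ a * exp (-(c * (x / 2) ^ b))) := by
  set δ : ℝ := 1 - 2 ^ (-b)
  have hδ : 0 < δ := sub_pos.2 (rpow_lt_one_of_one_lt_of_neg one_lt_two (neg_neg_of_pos hb))
  obtain ⟨K, hK, hPK⟩ := (rpowExpDerivPoly a b n).exists_abs_eval_mul_exp_neg_mul_le hδ
  refine ⟨2 ^ a * K, by positivity, fun c hc x hx => ?_⟩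
  rw [iteratedDeriv_rpow_mul_exp_eq _ _ _ _ hx]
  set P := rpowExpDerivPoly a b n
  set u := c * x ^ b
  have hu : 0 ≤ u := by positivity
  have hexp : exp (-u) = exp (-(δ * u)) * exp (-(c * (x / 2) ^ b)) := by
    rw [← exp_add, div_rpow hx.le zero_le_two, div_eq_mul_inv, ← rpow_neg zero_le_two]
    congr 1
    simp only [u, δ]
    ring
  have hpow : x ^ n * x ^ (a - n) = 2 ^ a * (x / 2) ^ a := by
    rw [div_rpow hx.le zero_le_two, mul_div_cancel₀ _ (by positivity), ← rpow_natCast,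
      ← rpow_add hx, add_sub_cancel]
  calc x ^ n * |x ^ (a - n) * exp (-u) * P.eval u|
      = 2 ^ a * (x / 2) ^ a * (|P.eval u| * exp (-(δ * u))) * exp (-(c * (x / 2) ^ b)) := by
        rw [abs_mul, abs_mul, abs_of_pos (rpow_pos_of_pos hx _), abs_of_pos (exp_pos _), hexp,
          ← hpow]
        ring
    _ ≤ 2 ^ a * (x / 2) ^ a * K * exp (-(c * (x / 2) ^ b)) := by
        gcongr; exact hPK u hu
    _ = 2 ^ a * K * ((x / 2) ^ a * exp (-(c * (x / 2) ^ b))) := by ring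

theorem stmt_5_general (β s γ : ℝ) (hβ0 : 0 < β) (hγ : 0 < γ)
    (n : ℕ) :
    ∃ C > 0, ∀ t : ℝ, 0 ≤ t → ∀ x : ℝ, 0 < x →
      x ^ n * |iteratedDeriv n
          (fun y : ℝ => y ^ ((β/2)*(s+1)) * Real.exp (-γ * y ^ (β/2) * t)) x|
        ≤ C * ((x/2) ^ ((β/2)*(s+1)) * Real.exp (-γ * (x/2) ^ (β/2) * t)) := by
  obtain ⟨C, hC, hbound⟩ :=
    exists_abs_iteratedDeriv_rpow_mul_exp_le ((β / 2) * (s + 1)) (half_pos hβ0) n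
  refine ⟨C, hC, fun t ht x hx => ?_⟩
  have hrw : ∀ y : ℝ, -γ * y ^ (β / 2) * t = -((γ * t) * y ^ (β / 2)) := fun y => by ring
  simp only [hrw]
  exact hbound (γ * t) (by positivity) x hx

/-- Derivative bounds: xⁿ |ρ_t⁽ⁿ⁾(x)| ≲ ρ_t(x/2), uniformly in t ≥ 0. -/
theorem stmt_5 (β s γ : ℝ) (hβ0 : 0 < β) (hβ2 : β ≤ 2) (hs : 0 ≤ s) (hγ : 0 < γ)
    (n : ℕ) :
    ∃ C > 0, ∀ t : ℝ, 0 ≤ t → ∀ x : ℝ, 0 < x →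
      x ^ n * |iteratedDeriv n
          (fun y : ℝ => y ^ ((β/2)*(s+1)) * Real.exp (-γ * y ^ (β/2) * t)) x|
        ≤ C * ((x/2) ^ ((β/2)*(s+1)) * Real.exp (-γ * (x/2) ^ (β/2) * t)) :=
  stmt_5_general β s γ hβ0 hγ n
end

section
/- If u ∈ C₀(ℝ^{2n}) (continuous, vanishing at infinity) and T ∈ (0,∞), then the function (t,x,v) ↦ u(x+tv, v) is uniformly continuous on [0,T] × ℝ^n × ℝ^n. -/
/-!
A continuous function that tends to a limit at infinity along a closed set is uniformly
continuous there (Heine–Cantor away from a compact set). Here `Γu = u ∘ Φ` with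
`Φ (t, x, v) = (x + t v, v)`, and on `[0, T] × ℝⁿ × ℝⁿ` the map `Φ` is proper: the preimage of a
compact `L` lies in the compact image of `[0, T] × L` under the inverse shear
`(t, y, v) ↦ (t, y - t v, v)`. Hence `Γu` still vanishes at infinity on that set.
-/

open Filter Set Topology

theorem ContinuousOn.uniformContinuousOn_of_tendsto_cocompact {α β : Type*} [UniformSpace α]
    [UniformSpace β] {f : α → β} {s : Set α} {b : β} (hs : IsClosed s) (hf : ContinuousOn f s)
    (h : Tendsto f (cocompact α ⊓ 𝓟 s) (𝓝 b)) : UniformContinuousOn f s := by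
  rw [uniformContinuousOn_iff_restrict]
  refine hf.domRestrict.uniformContinuous_of_tendsto_cocompact (h.comp ?_)
  exact tendsto_inf.2 ⟨hs.isClosedEmbedding_subtypeVal.tendsto_cocompact,
    tendsto_principal.2 (Eventually.of_forall Subtype.prop)⟩

theorem tendsto_shear_cocompact_inf_principal_prod_univ {R E : Type*} [TopologicalSpace R]
    [AddGroup E] [TopologicalSpace E] [IsTopologicalAddGroup E] [SMul R E] [ContinuousSMul R E]
    {K : Set R} (hK : IsCompact K) :
    Tendsto (fun p : R × E × E => (p.2.1 + p.1 • p.2.2, p.2.2))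
      (cocompact (R × E × E) ⊓ 𝓟 (K ×ˢ univ)) (cocompact (E × E)) := by
  refine hasBasis_cocompact.tendsto_right_iff.2 fun L hL => ?_
  have hcpt : IsCompact
      ((fun q : R × E × E => (q.1, q.2.1 - q.1 • q.2.2, q.2.2)) '' (K ×ˢ L)) :=
    (hK.prod hL).image (by fun_prop)
  filter_upwards [mem_inf_of_left hcpt.compl_mem_cocompact,
    mem_inf_of_right (mem_principal_self _)]
  rintro ⟨t, x, v⟩ hout ⟨ht, -⟩ hxv
  exact hout ⟨(t, x + t • v, v), ⟨ht, hxv⟩, by simp⟩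

theorem stmt_8_general (n : ℕ) (u : (Fin n → ℝ) × (Fin n → ℝ) → ℝ)
    (hc : Continuous u)
    (h0 : Filter.Tendsto u (Filter.cocompact ((Fin n → ℝ) × (Fin n → ℝ))) (nhds 0))
    (T : ℝ) :
    UniformContinuousOn
      (fun p : ℝ × ((Fin n → ℝ) × (Fin n → ℝ)) => u (p.2.1 + p.1 • p.2.2, p.2.2))
      (Set.Icc 0 T ×ˢ Set.univ) :=
  (hc.comp (by fun_prop)).continuousOn.uniformContinuousOn_of_tendsto_cocompact
    (isClosed_Icc.prod isClosed_univ)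
    (h0.comp (tendsto_shear_cocompact_inf_principal_prod_univ isCompact_Icc))

/-- If u ∈ C₀(ℝ^{2n}) then Γu is uniformly continuous on [0,T] × ℝ^{2n}. -/
theorem stmt_8 (n : ℕ) (hn : 1 ≤ n) (u : (Fin n → ℝ) × (Fin n → ℝ) → ℝ)
    (hc : Continuous u)
    (h0 : Filter.Tendsto u (Filter.cocompact ((Fin n → ℝ) × (Fin n → ℝ))) (nhds 0))
    (T : ℝ) (hT : 0 < T) :
    UniformContinuousOn
      (fun p : ℝ × ((Fin n → ℝ) × (Fin n → ℝ)) => u (p.2.1 + p.1 • p.2.2, p.2.2))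
      (Set.Icc 0 T ×ˢ Set.univ) :=
  stmt_8_general n u hc h0 T
end

section
/- Let n = 1 and a(t,x,v) = max(min(|x|,1), 1/2). Then a is bounded and uniformly continuous on [0,T] × ℝ², but the function (t,x,v) ↦ a(t, x+tv, v) is not uniformly continuous on [0,T] × ℝ² for any T > 0. -/
/-! Shearing `x ↦ x + t v` moves the point `(t, 0, 1/t)`, at distance `t` from `(0, 0, 1/t)`, to
`x = 1`, so any profile `g` with `g 0 ≠ g 1` yields a sheared function whose oscillation at
arbitrarily small scales stays `|g 1 - g 0|`. -/

open Set

theorem lipschitzWith_max_min_abs (c d : ℝ) :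
    LipschitzWith 1 fun x : ℝ => max (min |x| c) d :=
  (lipschitzWith_one_norm.min_const c).max_const d

theorem abs_max_min_abs_le_one (x : ℝ) : |max (min |x| 1) (1 / 2 : ℝ)| ≤ 1 := by
  rw [abs_of_nonneg (by positivity)]
  exact max_le (min_le_right _ _) (by norm_num)

theorem not_uniformContinuousOn_shear {g : ℝ → ℝ} (hg : g 0 ≠ g 1) {T : ℝ} (hT : 0 < T) :
    ¬ UniformContinuousOn (fun p : ℝ × ℝ × ℝ => g (p.2.1 + p.1 * p.2.2))
      (Icc 0 T ×ˢ univ) := by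
  rw [Metric.uniformContinuousOn_iff]
  push Not
  refine ⟨dist (g 0) (g 1), dist_pos.2 hg, fun δ hδ => ?_⟩
  obtain ⟨t, ht, htδ, htT⟩ : ∃ t, 0 < t ∧ t < δ ∧ t ≤ T :=
    ⟨min δ T / 2, by positivity, by linarith [min_le_left δ T, lt_min hδ hT],
      by linarith [min_le_right δ T, lt_min hδ hT]⟩
  refine ⟨(0, 0, 1 / t), ⟨⟨le_rfl, hT.le⟩, trivial⟩, (t, 0, 1 / t), ⟨⟨ht.le, htT⟩, trivial⟩,
    ?_, ?_⟩
  · simpa [Prod.dist_eq, Real.dist_eq, abs_of_pos ht] using ⟨htδ, hδ⟩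
  · simp [ht.ne']

/-- a(t,x,v) = max(min(|x|,1),1/2) is bounded and uniformly continuous on
    [0,T] × ℝ², but Γa is not uniformly continuous there, for any T > 0. -/
theorem stmt_9 (T : ℝ) (hT : 0 < T) :
    (∃ M : ℝ, ∀ p : ℝ × ℝ × ℝ, |max (min |p.2.1| 1) (1/2)| ≤ M) ∧
    UniformContinuousOn (fun p : ℝ × ℝ × ℝ => max (min |p.2.1| 1) (1/2))
      (Set.Icc 0 T ×ˢ Set.univ) ∧
    ¬ UniformContinuousOn
        (fun p : ℝ × ℝ × ℝ => max (min |p.2.1 + p.1 * p.2.2| 1) (1/2))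
        (Set.Icc 0 T ×ˢ Set.univ) := by
  have hprofile : UniformContinuous fun x : ℝ => max (min |x| 1) (1 / 2 : ℝ) :=
    (lipschitzWith_max_min_abs 1 (1 / 2)).uniformContinuous
  have hjump : max (min |(0 : ℝ)| 1) (1 / 2 : ℝ) ≠ max (min |(1 : ℝ)| 1) (1 / 2) := by
    norm_num
  exact ⟨⟨1, fun p => abs_max_min_abs_le_one p.2.1⟩,
    (hprofile.comp (uniformContinuous_fst.comp uniformContinuous_snd)).uniformContinuousOn,
    not_uniformContinuousOn_shear (g := fun x => max (min |x| 1) (1 / 2)) hjump hT⟩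
end

section
/- Let X be a Banach space, p ∈ (1,∞), μ ∈ (1/p,1], T ∈ (0,∞]. Every u ∈ W^{1,p}_μ((0,T);X) (i.e. u, u' ∈ L^p_μ((0,T);X)) has a continuous representative on [0,T], and the embedding W^{1,p}_μ((0,T);X) ↪ C([0,T];X) is continuous; in particular the trace u(0) is well defined. -/
/-!
Extend `v = u'` by zero off `(0, T)` and put `a = p - μp`. Hölder's inequality with the weights
`r ^ (a / p)` and `r ^ (-a / p)` bounds `∫_I ‖v‖` by the weighted norm of `v` times
`(∫_I r ^ (-a / (p - 1)))^(1/q)`, and `μ > 1/p` is exactly `-a / (p - 1) > -1`. So `v` is locally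
integrable and `w x = u ℓ + ∫_ℓ^x v` is a continuous representative of `u`.

For the bound at `t ∈ [0, T]`, take a window of length `ℓ`, inside `[ℓ, T)` and within `2ℓ` of `t`,
and a point `s` of it where `‖u‖` is minimal. The weight is `≥ ℓ ^ a` on the window, so
`ℓ ^ (a + 1) ‖u s‖^p` is at most the weighted norm of `u`; and `‖w t - u s‖` is bounded by Hölder
on the interval between `s` and `t`, where the decreasing dual weight integrates to at most its
integral over `[0, 2ℓ]`.
-/

open MeasureTheory ENNReal Set
open scoped Interval

theorem lintegral_rpow_Ioc_le {α x y L : ℝ} (hα : -1 < α) (hα0 : α ≤ 0) (hx : 0 ≤ x)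
    (hxy : x ≤ y) (hL : y - x ≤ L) :
    ∫⁻ r in Ioc x y, ENNReal.ofReal (r ^ α) ≤ ENNReal.ofReal (L ^ (α + 1) / (α + 1)) := by
  have hβ : 0 < α + 1 := by linarith
  have hint : IntegrableOn (fun r : ℝ => r ^ α) (Ioc x y) :=
    (intervalIntegrable_iff_integrableOn_Ioc_of_le hxy).1
      (intervalIntegral.intervalIntegrable_rpow' hα)
  have hnonneg : 0 ≤ᵐ[volume.restrict (Ioc x y)] fun r : ℝ => r ^ α :=
    (ae_restrict_iff' measurableSet_Ioc).2
      (ae_of_all _ fun r hr => Real.rpow_nonneg (hx.trans hr.1.le) _)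
  rw [← ofReal_integral_eq_lintegral_ofReal hint hnonneg, ← intervalIntegral.integral_of_le hxy,
    integral_rpow (Or.inl hα)]
  refine ENNReal.ofReal_le_ofReal (div_le_div_of_nonneg_right ?_ hβ.le)
  calc y ^ (α + 1) - x ^ (α + 1) = ((y - x) + x) ^ (α + 1) - x ^ (α + 1) := by ring_nf
    _ ≤ (y - x) ^ (α + 1) := by
        linarith [Real.rpow_add_le_add_rpow (sub_nonneg.2 hxy) hx hβ.le (by linarith : α + 1 ≤ 1)]
    _ ≤ L ^ (α + 1) := Real.rpow_le_rpow (sub_nonneg.2 hxy) hL hβ.le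

theorem lintegral_rpow_uIoc_le {α x y L : ℝ} (hα : -1 < α) (hα0 : α ≤ 0) (hx : 0 ≤ x)
    (hy : 0 ≤ y) (hL : |y - x| ≤ L) :
    ∫⁻ r in Ι x y, ENNReal.ofReal (r ^ α) ≤ ENNReal.ofReal (L ^ (α + 1) / (α + 1)) := by
  rcases le_total x y with hxy | hyx
  · rw [uIoc_of_le hxy]
    exact lintegral_rpow_Ioc_le hα hα0 hx hxy ((le_abs_self _).trans hL)
  · rw [uIoc_of_ge hyx]
    exact lintegral_rpow_Ioc_le hα hα0 hy hyx (by linarith [(abs_le.1 hL).1])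

theorem ENNReal.rpow_le_two_rpow_mul_max_mul_add {p : ℝ} (hp : 1 ≤ p)
    {z x y A B c₁ c₂ : ℝ≥0∞} (hz : z ≤ x + y) (hx : x ^ p ≤ c₁ * A) (hy : y ^ p ≤ c₂ * B) :
    z ^ p ≤ 2 ^ (p - 1) * max c₁ c₂ * (A + B) :=
  calc z ^ p ≤ (x + y) ^ p := rpow_le_rpow hz (by linarith)
    _ ≤ 2 ^ (p - 1) * (x ^ p + y ^ p) := rpow_add_le_mul_rpow_add_rpow _ _ hp
    _ ≤ 2 ^ (p - 1) * (max c₁ c₂ * A + max c₁ c₂ * B) := by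
        gcongr
        · exact hx.trans (mul_le_mul_left (le_max_left _ _) _)
        · exact hy.trans (mul_le_mul_left (le_max_right _ _) _)
    _ = 2 ^ (p - 1) * max c₁ c₂ * (A + B) := by rw [mul_assoc, ← mul_add]

/-- With `β = 1 - a / (p - 1)`, `(2ℓ) ^ β / β` is the integral of the dual weight `r ^ (β - 1)`
over `[0, 2ℓ]`. -/
noncomputable def weightedTraceConst (p q a ℓ : ℝ) : ℝ≥0∞ :=
  2 ^ (p - 1) * max (ENNReal.ofReal (ℓ ^ (a + 1)))⁻¹
    (ENNReal.ofReal ((2 * ℓ) ^ (-(a / (p - 1)) + 1) / (-(a / (p - 1)) + 1)) ^ (p / q))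

theorem weightedTraceConst_ne_zero (p q a ℓ : ℝ) : weightedTraceConst p q a ℓ ≠ 0 :=
  mul_ne_zero (ENNReal.rpow_pos two_pos ofNat_ne_top).ne'
    (lt_max_of_lt_left (ENNReal.inv_pos.2 ofReal_ne_top)).ne'

theorem weightedTraceConst_ne_top {p q a ℓ : ℝ} (hpq : p.HolderConjugate q) (hℓ : 0 < ℓ) :
    weightedTraceConst p q a ℓ ≠ ⊤ :=
  mul_ne_top (rpow_ne_top_of_ne_zero two_ne_zero ofNat_ne_top)
    (max_lt (ENNReal.inv_ne_top.2 (ENNReal.ofReal_pos.2 (by positivity)).ne').lt_top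
      (rpow_ne_top_of_nonneg (div_nonneg hpq.nonneg hpq.symm.nonneg) ofReal_ne_top).lt_top).ne

theorem ordConnected_setOf_pos_ofReal_lt (T : ℝ≥0∞) :
    {t : ℝ | 0 < t ∧ ENNReal.ofReal t < T}.OrdConnected :=
  ⟨fun _ hx _ hy _ hr => ⟨hx.1.trans_le hr.1, (ENNReal.ofReal_le_ofReal hr.2).trans_lt hy.2⟩⟩

theorem measurableSet_setOf_pos_ofReal_lt (T : ℝ≥0∞) :
    MeasurableSet {t : ℝ | 0 < t ∧ ENNReal.ofReal t < T} :=
  (measurableSet_lt measurable_const measurable_id).inter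
    (measurableSet_lt ENNReal.measurable_ofReal measurable_const)

theorem Icc_subset_setOf_pos_ofReal_lt {T : ℝ≥0∞} {ℓ t : ℝ} (hℓ : 0 < ℓ)
    (hℓT : ENNReal.ofReal (2 * ℓ) < T) (htT : ENNReal.ofReal t ≤ T) :
    Icc ℓ (max (2 * ℓ) (t - ℓ)) ⊆ {t : ℝ | 0 < t ∧ ENNReal.ofReal t < T} := by
  refine fun r hr => ⟨hℓ.trans_le hr.1, ?_⟩
  rcases le_max_iff.1 hr.2 with h | h
  · exact (ENNReal.ofReal_le_ofReal h).trans_lt hℓT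
  · exact (ENNReal.ofReal_lt_ofReal_iff'.2 ⟨by linarith, by linarith [hr.1]⟩).trans_le htT

section

variable {X : Type*} [NormedAddCommGroup X]

theorem setLIntegral_enorm_indicator_le_weighted {p q a : ℝ} (hpq : p.HolderConjugate q)
    {S W : Set ℝ} (hS : S ⊆ Ioi 0) (hSm : MeasurableSet S) (hWm : MeasurableSet W)
    {f : ℝ → X} (hf : AEStronglyMeasurable f (volume.restrict S)) :
    ∫⁻ r in W, ‖S.indicator f r‖ₑ ≤
      (∫⁻ r in S, ENNReal.ofReal (r ^ a * ‖f r‖ ^ p)) ^ (1 / p) *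
        (∫⁻ r in W, ENNReal.ofReal (r ^ (-(a / (p - 1))))) ^ (1 / q) := by
  have hp0 := hpq.pos
  have hdual : -(a / p) * q = -(a / (p - 1)) := by
    rw [hpq.conjugate_eq]; field_simp [hpq.sub_one_ne_zero]
  set F : ℝ → ℝ≥0∞ := fun r => ENNReal.ofReal (r ^ (a / p)) * ‖f r‖ₑ
  set G : ℝ → ℝ≥0∞ := fun r => ENNReal.ofReal (r ^ (-(a / p)))
  have hSW : MeasurableSet (S ∩ W) := hSm.inter hWm
  have hFm : AEMeasurable F (volume.restrict (S ∩ W)) :=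
    (measurable_id.pow_const _).ennreal_ofReal.aemeasurable.mul
      (hf.mono_measure (Measure.restrict_mono inter_subset_left le_rfl)).enorm
  have hGm : AEMeasurable G (volume.restrict (S ∩ W)) :=
    (measurable_id.pow_const _).ennreal_ofReal.aemeasurable
  have hFG : ∀ r ∈ S ∩ W, ‖f r‖ₑ = (F * G) r := by
    intro r hr
    have hr0 : 0 < r := hS hr.1
    rw [Pi.mul_apply, mul_right_comm, ← ENNReal.ofReal_mul (by positivity), ← Real.rpow_add hr0,
      add_neg_cancel, Real.rpow_zero, ENNReal.ofReal_one, one_mul]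
  have hFp : ∫⁻ r in S ∩ W, F r ^ p ≤ ∫⁻ r in S, ENNReal.ofReal (r ^ a * ‖f r‖ ^ p) := by
    calc ∫⁻ r in S ∩ W, F r ^ p = ∫⁻ r in S ∩ W, ENNReal.ofReal (r ^ a * ‖f r‖ ^ p) := by
          refine setLIntegral_congr_fun hSW fun r hr => ?_
          have hr0 : 0 < r := hS hr.1
          rw [ENNReal.mul_rpow_of_nonneg _ _ hp0.le, ENNReal.ofReal_rpow_of_nonneg (by positivity)
            hp0.le, ← Real.rpow_mul hr0.le, div_mul_cancel₀ _ hp0.ne', ← ofReal_norm,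
            ENNReal.ofReal_rpow_of_nonneg (norm_nonneg _) hp0.le,
            ← ENNReal.ofReal_mul (by positivity)]
      _ ≤ _ := lintegral_mono_set inter_subset_left
  have hGq : ∫⁻ r in S ∩ W, G r ^ q ≤ ∫⁻ r in W, ENNReal.ofReal (r ^ (-(a / (p - 1)))) := by
    calc ∫⁻ r in S ∩ W, G r ^ q = ∫⁻ r in S ∩ W, ENNReal.ofReal (r ^ (-(a / (p - 1)))) := by
          refine setLIntegral_congr_fun hSW fun r hr => ?_
          have hr0 : 0 < r := hS hr.1
          rw [ENNReal.ofReal_rpow_of_nonneg (by positivity) hpq.symm.nonneg, ← Real.rpow_mul hr0.le,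
            hdual]
      _ ≤ _ := lintegral_mono_set inter_subset_right
  calc ∫⁻ r in W, ‖S.indicator f r‖ₑ = ∫⁻ r in S ∩ W, ‖f r‖ₑ := by
        simp_rw [enorm_indicator_eq_indicator_enorm]; exact setLIntegral_indicator hSm _
    _ = ∫⁻ r in S ∩ W, (F * G) r := setLIntegral_congr_fun hSW hFG
    _ ≤ (∫⁻ r in S ∩ W, F r ^ p) ^ (1 / p) * (∫⁻ r in S ∩ W, G r ^ q) ^ (1 / q) :=
        ENNReal.lintegral_mul_le_Lp_mul_Lq _ hpq hFm hGm
    _ ≤ _ := by gcongr; exact one_div_nonneg.2 hpq.symm.nonneg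

theorem intervalIntegrable_indicator_of_weighted {p q a : ℝ} (hpq : p.HolderConjugate q)
    (ha : a < p - 1) {S : Set ℝ} (hS : S ⊆ Ioi 0) (hSm : MeasurableSet S) {f : ℝ → X}
    (hf : AEStronglyMeasurable f (volume.restrict S))
    (hfin : ∫⁻ r in S, ENNReal.ofReal (r ^ a * ‖f r‖ ^ p) < ⊤) (x y : ℝ) :
    IntervalIntegrable (S.indicator f) volume x y := by
  have hα : -1 < -(a / (p - 1)) := by
    rw [neg_lt_neg_iff, div_lt_one (sub_pos.2 hpq.lt)]; exact ha
  have hweight : ∫⁻ r in Ι x y, ENNReal.ofReal (r ^ (-(a / (p - 1)))) < ⊤ :=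
    (intervalIntegrable_iff.1 (intervalIntegral.intervalIntegrable_rpow' hα)).lintegral_lt_top
  refine intervalIntegrable_iff.2 ⟨((aestronglyMeasurable_indicator_iff hSm).2 hf).restrict, ?_⟩
  exact (setLIntegral_enorm_indicator_le_weighted hpq hS hSm measurableSet_uIoc hf).trans_lt
    (mul_lt_top (rpow_lt_top_of_nonneg (one_div_nonneg.2 hpq.nonneg) hfin.ne)
      (rpow_lt_top_of_nonneg (one_div_nonneg.2 hpq.symm.nonneg) hweight.ne))

theorem exists_mem_Icc_ofReal_mul_rpow_le {u : ℝ → X} {a p x y : ℝ} (ha : 0 ≤ a) (hp : 0 ≤ p)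
    (hx : 0 ≤ x) (hxy : x ≤ y) (hu : ContinuousOn u (Icc x y)) :
    ∃ s ∈ Icc x y, ENNReal.ofReal ((y - x) * x ^ a * ‖u s‖ ^ p) ≤
      ∫⁻ r in Icc x y, ENNReal.ofReal (r ^ a * ‖u r‖ ^ p) := by
  obtain ⟨s, hs, hmin⟩ := isCompact_Icc.exists_isMinOn (nonempty_Icc.2 hxy) hu.norm
  refine ⟨s, hs, ?_⟩
  calc ENNReal.ofReal ((y - x) * x ^ a * ‖u s‖ ^ p)
      = ∫⁻ _ in Icc x y, ENNReal.ofReal (x ^ a * ‖u s‖ ^ p) := by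
        rw [setLIntegral_const, Real.volume_Icc, ← ENNReal.ofReal_mul (by positivity)]
        ring_nf
    _ ≤ ∫⁻ r in Icc x y, ENNReal.ofReal (r ^ a * ‖u r‖ ^ p) :=
        setLIntegral_mono' measurableSet_Icc fun r hr => ENNReal.ofReal_le_ofReal <|
          mul_le_mul (Real.rpow_le_rpow hx hr.1 ha) (Real.rpow_le_rpow (norm_nonneg _) (hmin hr) hp)
            (by positivity) (Real.rpow_nonneg (hx.trans hr.1) _)

theorem exists_near_ofReal_mul_rpow_le {u : ℝ → X} {a p ℓ t : ℝ} (ha : 0 ≤ a) (hp : 0 ≤ p)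
    (hℓ : 0 < ℓ) (ht : 0 ≤ t) (hu : ContinuousOn u (Icc ℓ (max (2 * ℓ) (t - ℓ)))) :
    ∃ s ∈ Icc ℓ (max (2 * ℓ) (t - ℓ)), |t - s| ≤ 2 * ℓ ∧
      ENNReal.ofReal (ℓ ^ (a + 1) * ‖u s‖ ^ p) ≤
        ∫⁻ r in Icc ℓ (max (2 * ℓ) (t - ℓ)), ENNReal.ofReal (r ^ a * ‖u r‖ ^ p) := by
  obtain ⟨x, hℓx, htx, hx⟩ : ∃ x, ℓ ≤ x ∧ t - 2 * ℓ ≤ x ∧ (x = ℓ ∨ x = t - 2 * ℓ) :=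
    ⟨_, le_max_left _ _, le_max_right _ _, max_choice _ _⟩
  have hwindow : Icc x (x + ℓ) ⊆ Icc ℓ (max (2 * ℓ) (t - ℓ)) := by
    refine Icc_subset_Icc hℓx ?_
    rcases hx with rfl | rfl
    · exact (le_max_left _ _).trans' (by linarith)
    · exact (le_max_right _ _).trans' (by linarith)
  obtain ⟨s, hs, hus⟩ := exists_mem_Icc_ofReal_mul_rpow_le ha hp (hℓ.le.trans hℓx)
    (by linarith) (hu.mono hwindow)
  refine ⟨s, hwindow hs, abs_le.2 ⟨?_, by linarith [hs.1]⟩, ?_⟩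
  · rcases hx with rfl | rfl <;> linarith [hs.2]
  · refine le_trans (ENNReal.ofReal_le_ofReal ?_) (hus.trans (lintegral_mono_set hwindow))
    rw [add_sub_cancel_left, Real.rpow_add_one hℓ.ne', mul_comm (ℓ ^ a)]
    gcongr

theorem add_integral_indicator_eq_of_hasDerivAt [NormedSpace ℝ X] [CompleteSpace X] {S : Set ℝ}
    (hS : S.OrdConnected) {u v : ℝ → X} (hderiv : ∀ t ∈ S, HasDerivAt u (v t) t) {c x : ℝ}
    (hc : c ∈ S) (hx : x ∈ S)
    (hint : IntervalIntegrable (S.indicator v) volume c x) :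
    u c + ∫ r in c..x, S.indicator v r = u x := by
  have hsub : uIcc c x ⊆ S := hS.uIcc_subset hc hx
  rw [intervalIntegral.integral_eq_sub_of_hasDerivAt
    (fun r hr => by rw [indicator_of_mem (hsub hr)]; exact hderiv r (hsub hr)) hint]
  abel

theorem enorm_add_integral_le [NormedSpace ℝ X] (y : X) {g : ℝ → X}
    (hg : ∀ a b, IntervalIntegrable g volume a b) (c s t : ℝ) :
    ‖y + ∫ r in c..t, g r‖ₑ ≤ ‖y + ∫ r in c..s, g r‖ₑ + ∫⁻ r in Ι s t, ‖g r‖ₑ := by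
  rw [← intervalIntegral.integral_add_adjacent_intervals (hg c s) (hg s t), ← add_assoc]
  refine (enorm_add_le _ _).trans (add_le_add_right ?_ _)
  rw [← ofReal_norm, intervalIntegral.norm_integral_eq_norm_integral_uIoc, ofReal_norm]
  exact enorm_integral_le_lintegral_enorm _

theorem enorm_primitive_rpow_le [NormedSpace ℝ X] [CompleteSpace X] {p q a ℓ t : ℝ}
    (hpq : p.HolderConjugate q) (ha0 : 0 ≤ a) (ha : a < p - 1) {S : Set ℝ} (hS0 : S ⊆ Ioi 0)
    (hSm : MeasurableSet S) (hS : S.OrdConnected) {u v : ℝ → X}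
    (hderiv : ∀ t ∈ S, HasDerivAt u (v t) t) (hvm : AEStronglyMeasurable v (volume.restrict S))
    (hvint : ∀ x y, IntervalIntegrable (S.indicator v) volume x y) (hℓ : 0 < ℓ) (ht : 0 ≤ t)
    (hwin : Icc ℓ (max (2 * ℓ) (t - ℓ)) ⊆ S) :
    ‖u ℓ + ∫ r in ℓ..t, S.indicator v r‖ₑ ^ p ≤ weightedTraceConst p q a ℓ *
      ((∫⁻ r in S, ENNReal.ofReal (r ^ a * ‖u r‖ ^ p)) +
        ∫⁻ r in S, ENNReal.ofReal (r ^ a * ‖v r‖ ^ p)) := by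
  set α := -(a / (p - 1))
  set K := (2 * ℓ) ^ (α + 1) / (α + 1)
  set Φu := ∫⁻ r in S, ENNReal.ofReal (r ^ a * ‖u r‖ ^ p)
  set Φv := ∫⁻ r in S, ENNReal.ofReal (r ^ a * ‖v r‖ ^ p)
  have hα : -1 < α := by rw [neg_lt_neg_iff, div_lt_one (sub_pos.2 hpq.lt)]; exact ha
  have hα0 : α ≤ 0 := neg_nonpos.2 (div_nonneg ha0 (sub_pos.2 hpq.lt).le)
  have hℓa : ENNReal.ofReal (ℓ ^ (a + 1)) ≠ 0 := (ENNReal.ofReal_pos.2 (by positivity)).ne'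
  have hℓS : ℓ ∈ S := hwin ⟨le_rfl, le_max_of_le_left (by linarith)⟩
  obtain ⟨s, hs, hst, hus⟩ := exists_near_ofReal_mul_rpow_le ha0 hpq.nonneg hℓ ht
    fun r hr => (hderiv r (hwin hr)).continuousAt.continuousWithinAt
  have hus' : ‖u s‖ₑ ^ p ≤ (ENNReal.ofReal (ℓ ^ (a + 1)))⁻¹ * Φu := by
    rw [← ENNReal.div_eq_inv_mul, ENNReal.le_div_iff_mul_le (Or.inl hℓa) (Or.inl ofReal_ne_top),
      mul_comm, ← ofReal_norm, ENNReal.ofReal_rpow_of_nonneg (norm_nonneg _) hpq.nonneg,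
      ← ENNReal.ofReal_mul (by positivity)]
    exact hus.trans (lintegral_mono_set hwin)
  have hvst : ∫⁻ r in Ι s t, ‖S.indicator v r‖ₑ ≤ Φv ^ (1 / p) * ENNReal.ofReal K ^ (1 / q) := by
    refine (setLIntegral_enorm_indicator_le_weighted (a := a) hpq hS0 hSm measurableSet_uIoc
      hvm).trans ?_
    gcongr
    · exact one_div_nonneg.2 hpq.symm.nonneg
    · exact lintegral_rpow_uIoc_le hα hα0 (hℓ.le.trans hs.1) ht hst
  refine ENNReal.rpow_le_two_rpow_mul_max_mul_add hpq.lt.le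
    (enorm_add_integral_le _ hvint ℓ s t) ?_ ?_
  · rwa [add_integral_indicator_eq_of_hasDerivAt hS hderiv hℓS (hwin hs) (hvint ℓ s)]
  · calc (∫⁻ r in Ι s t, ‖S.indicator v r‖ₑ) ^ p
        ≤ (Φv ^ (1 / p) * ENNReal.ofReal K ^ (1 / q)) ^ p := ENNReal.rpow_le_rpow hvst hpq.nonneg
      _ = ENNReal.ofReal K ^ (p / q) * Φv := by
        rw [ENNReal.mul_rpow_of_nonneg _ _ hpq.nonneg, ← ENNReal.rpow_mul, ← ENNReal.rpow_mul,
          one_div_mul_cancel hpq.ne_zero, ENNReal.rpow_one, mul_comm, one_div, inv_mul_eq_div]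

end

/-- W^{1,p}_μ((0,T);X) embeds continuously into C([0,T];X);
    in particular the trace at t = 0 is well defined. -/
theorem stmt_11 {X : Type*} [NormedAddCommGroup X] [NormedSpace ℝ X]
    [CompleteSpace X]
    (p μ : ℝ) (hp : 1 < p) (hμ1 : 1/p < μ) (hμ2 : μ ≤ 1)
    (T : ℝ≥0∞) (hT : 0 < T) :
    ∃ C > 0, ∀ u v : ℝ → X,
      (∀ t ∈ {t : ℝ | 0 < t ∧ ENNReal.ofReal t < T}, HasDerivAt u (v t) t) →
      (∫⁻ t in {t : ℝ | 0 < t ∧ ENNReal.ofReal t < T},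
          ENNReal.ofReal (t ^ (p - μ*p) * ‖u t‖ ^ p)) < ⊤ →
      (∫⁻ t in {t : ℝ | 0 < t ∧ ENNReal.ofReal t < T},
          ENNReal.ofReal (t ^ (p - μ*p) * ‖v t‖ ^ p)) < ⊤ →
      ∃ w : ℝ → X,
        ContinuousOn w {t : ℝ | 0 ≤ t ∧ ENNReal.ofReal t ≤ T} ∧
        (∀ t ∈ {t : ℝ | 0 < t ∧ ENNReal.ofReal t < T}, w t = u t) ∧
        ∀ t ∈ {t : ℝ | 0 ≤ t ∧ ENNReal.ofReal t ≤ T},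
          ENNReal.ofReal (‖w t‖ ^ p) ≤ ENNReal.ofReal C *
            ((∫⁻ r in {r : ℝ | 0 < r ∧ ENNReal.ofReal r < T},
                ENNReal.ofReal (r ^ (p - μ*p) * ‖u r‖ ^ p))
              + ∫⁻ r in {r : ℝ | 0 < r ∧ ENNReal.ofReal r < T},
                  ENNReal.ofReal (r ^ (p - μ*p) * ‖v r‖ ^ p)) := by
  have hpq := Real.HolderConjugate.conjExponent hp
  have ha0 : 0 ≤ p - μ * p := by nlinarith
  have ha : p - μ * p < p - 1 := by rw [div_lt_iff₀ hpq.pos] at hμ1; linarith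
  obtain ⟨ℓ, hℓ, hℓT⟩ : ∃ ℓ > 0, ENNReal.ofReal (2 * ℓ) < T := by
    obtain ⟨r, -, hr0, hrT⟩ := ENNReal.lt_iff_exists_real_btwn.1 hT
    exact ⟨r / 2, by simpa using hr0, by rwa [mul_div_cancel₀ _ two_ne_zero]⟩
  have hCtop := weightedTraceConst_ne_top (a := p - μ * p) hpq hℓ
  refine ⟨_, ENNReal.toReal_pos (weightedTraceConst_ne_zero _ _ _ _) hCtop,
    fun u v hderiv _ hv => ?_⟩
  set S := {t : ℝ | 0 < t ∧ ENNReal.ofReal t < T}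
  have hSm : MeasurableSet S := measurableSet_setOf_pos_ofReal_lt T
  have hvm : AEStronglyMeasurable v (volume.restrict S) :=
    (aestronglyMeasurable_deriv u _).congr
      ((ae_restrict_iff' hSm).2 (ae_of_all _ fun t ht => (hderiv t ht).deriv))
  have hvint := intervalIntegrable_indicator_of_weighted hpq ha (fun _ ht => ht.1) hSm hvm hv
  have hℓS : ℓ ∈ S := ⟨hℓ, (ENNReal.ofReal_le_ofReal (by linarith)).trans_lt hℓT⟩
  refine ⟨fun x => u ℓ + ∫ r in ℓ..x, S.indicator v r,
    (continuous_const.add (intervalIntegral.continuous_primitive hvint ℓ)).continuousOn,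
    fun x hx => add_integral_indicator_eq_of_hasDerivAt (ordConnected_setOf_pos_ofReal_lt T)
      hderiv hℓS hx (hvint ℓ x), ?_⟩
  rintro t ⟨ht0, htT⟩
  rw [ENNReal.ofReal_toReal hCtop, ← ENNReal.ofReal_rpow_of_nonneg (norm_nonneg _) hpq.nonneg,
    ofReal_norm]
  exact enorm_primitive_rpow_le hpq ha0 ha (fun _ ht => ht.1) hSm
    (ordConnected_setOf_pos_ofReal_lt T) hderiv hvm hvint hℓ ht0
    (Icc_subset_setOf_pos_ofReal_lt hℓ hℓT htT)
end
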